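/- Let f : X → X be the one-sided full shift on the alphabet {0,1,2,3}. In Example 7 (the potential Φ of Equation (defpotphi) built from a > 0, a continuous strictly concave increasing ℓ₁ : [0,a] → ℝ with ℓ₁(0) = 0, ℓ₂ = −ℓ₁, and an exponentially strictly decreasing sequence x_k → 0 in (0,a)): the potential Φ is continuous on X and (0,0) is an exposed point of Rot(Φ). -/

import Mathlib

open MeasureTheory

noncomputable section

/-- The full shift space on the four symbols `{0,1,2,3}`. -/
abbrev FS : Type := ℕ → Fin 4

/-- The (one-sided full) shift map. -/
def shift4 (x : FS) : FS := fun n => x (n + 1)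

/-- The symbol group: `true` for `S₁ = {0,1}`, `false` for `S₂ = {2,3}`. -/
def grp (s : Fin 4) : Bool := decide (s.1 ≤ 1)

/-- `μ` is a shift-invariant Borel probability measure on the full shift. -/
def InvariantProb (μ : ProbabilityMeasure FS) : Prop :=
  (μ : Measure FS).map shift4 = (μ : Measure FS)

/-- The generalized rotation set of a potential `Φ : FS → ℝ²` with respect to the shift. -/
def rot (Φ : FS → ℝ × ℝ) : Set (ℝ × ℝ) :=
  {w | ∃ μ : ProbabilityMeasure FS, InvariantProb μ ∧ (∫ x, Φ x ∂(μ : Measure FS)) = w}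

open scoped Classical in
/-- The potential `Φ` of Example 7 (Equation (defpotphi)), built from `a > 0`, the concave
arc `ℓ = ℓ₁` (with `ℓ₂ = −ℓ₁`), the sequence `(x_k)` and the cutoff `λ = lam`.
For a sequence `ξ`: if `ξ` stays forever in one of the symbol groups `S₁ = {0,1}`,
`S₂ = {2,3}`, the value is `(0,0)`; if it leaves its initial group within the first `lam`
coordinates the value is `(a,0)`; otherwise, if `t ≥ lam` is the exact number of initial
coordinates spent in one group (so `ξ ∈ Y_i(k)` with `k = t+1 > lam`), the value is
`(x_{k−λ}, ℓ₁(x_{k−λ}))` on the cylinder of the fixed point `111…`, `(x_{k−λ}, ℓ₂(x_{k−λ}))`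
on the cylinder of `333…`, and `(x_{k−λ}, 0)` otherwise. -/
def PhiEx (a : ℝ) (lam : ℕ) (ℓ : ℝ → ℝ) (xs : ℕ → ℝ) (ξ : FS) : ℝ × ℝ :=
  if ∀ j, grp (ξ j) = grp (ξ 0) then (0, 0)
  else
    let t : ℕ := sInf {j | grp (ξ j) ≠ grp (ξ 0)}
    if t < lam then (a, 0)
    else if ∀ j < t, ξ j = (1 : Fin 4) then (xs (t + 1 - lam), ℓ (xs (t + 1 - lam)))
    else if ∀ j < t, ξ j = (3 : Fin 4) then (xs (t + 1 - lam), -ℓ (xs (t + 1 - lam)))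
    else (xs (t + 1 - lam), 0)

/-!
Off the set of sequences that stay in one symbol group forever, `Φ` only depends on the
coordinates up to the first change of group, so it is locally constant there. Near a sequence
that stays forever, the first change of group happens late, so `Φ` takes values `(x_k, ±ℓ(x_k))`
or `(x_k, 0)` with `k` large, and these tend to `(0,0) = Φ(ξ)`.

Every value of `Φ` other than `(0,0)` has positive first coordinate. Hence the functional
`-(first coordinate)` is nonpositive on `Rot(Φ)` and vanishes only at integrals of measures
for which `Φ = 0` almost everywhere, i.e. only at `(0,0)`, which is attained by the Dirac
measure at the fixed point `000…`.
-/

open Filter Topology PiNat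

section ExitTime

def StaysInGroup (ξ : FS) : Prop := ∀ j, grp (ξ j) = grp (ξ 0)

/-- The time `t` of `PhiEx`; it is `0` (junk) when `ξ` stays in its group forever. -/
def exitTime (ξ : FS) : ℕ := sInf {j | grp (ξ j) ≠ grp (ξ 0)}

variable {ξ η : FS}

lemma grp_exitTime_ne (h : ¬ StaysInGroup ξ) : grp (ξ (exitTime ξ)) ≠ grp (ξ 0) := by
  unfold StaysInGroup at h
  push Not at h
  exact Nat.sInf_mem h

lemma grp_eq_of_lt_exitTime {j : ℕ} (hj : j < exitTime ξ) : grp (ξ j) = grp (ξ 0) := by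
  by_contra h
  exact (Nat.sInf_le h).not_gt hj

lemma le_exitTime (h : ¬ StaysInGroup ξ) {n : ℕ} (hn : ∀ j < n, grp (ξ j) = grp (ξ 0)) :
    n ≤ exitTime ξ :=
  not_lt.1 fun hlt => grp_exitTime_ne h (hn _ hlt)

lemma exitTime_eq_of_mem_cylinder (hξ : ¬ StaysInGroup ξ)
    (hη : η ∈ cylinder ξ (exitTime ξ + 1)) :
    ¬ StaysInGroup η ∧ exitTime η = exitTime ξ := by
  have hagree : ∀ j ≤ exitTime ξ, η j = ξ j := fun j hj => hη j (Nat.lt_succ_of_le hj)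
  have hexit : grp (η (exitTime ξ)) ≠ grp (η 0) := by
    rw [hagree _ le_rfl, hagree 0 (Nat.zero_le _)]
    exact grp_exitTime_ne hξ
  have hη' : ¬ StaysInGroup η := fun h => hexit (h _)
  refine ⟨hη', le_antisymm (Nat.sInf_le hexit) (le_exitTime hη' fun j hj => ?_)⟩
  rw [hagree j hj.le, hagree 0 (Nat.zero_le _)]
  exact grp_eq_of_lt_exitTime hj

lemma eventually_le_exitTime (hξ : StaysInGroup ξ) (n : ℕ) :
    ∀ᶠ η in 𝓝 ξ, ¬ StaysInGroup η → n ≤ exitTime η := by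
  filter_upwards [(isOpen_cylinder _ ξ n).mem_nhds (self_mem_cylinder ξ n)] with η hη hη'
  refine le_exitTime hη' fun j hj => ?_
  rw [hη j hj, hη 0 (by omega)]
  exact hξ j

end ExitTime

section Potential

variable {a : ℝ} {lam : ℕ} {ℓ : ℝ → ℝ} {xs : ℕ → ℝ} {ξ η : FS}

lemma PhiEx_of_staysInGroup (h : StaysInGroup ξ) : PhiEx a lam ℓ xs ξ = 0 :=
  if_pos h

open scoped Classical in
lemma PhiEx_of_not_staysInGroup (h : ¬ StaysInGroup ξ) :
    PhiEx a lam ℓ xs ξ =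
      if exitTime ξ < lam then (a, 0)
      else if ∀ j < exitTime ξ, ξ j = (1 : Fin 4) then
        (xs (exitTime ξ + 1 - lam), ℓ (xs (exitTime ξ + 1 - lam)))
      else if ∀ j < exitTime ξ, ξ j = (3 : Fin 4) then
        (xs (exitTime ξ + 1 - lam), -ℓ (xs (exitTime ξ + 1 - lam)))
      else (xs (exitTime ξ + 1 - lam), 0) :=
  if_neg h

lemma PhiEx_eq_of_mem_cylinder (hξ : ¬ StaysInGroup ξ) (hη : η ∈ cylinder ξ (exitTime ξ + 1)) :
    PhiEx a lam ℓ xs η = PhiEx a lam ℓ xs ξ := by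
  obtain ⟨hη', hexit⟩ := exitTime_eq_of_mem_cylinder hξ hη
  have hprefix : ∀ s : Fin 4, (∀ j < exitTime ξ, η j = s) ↔ (∀ j < exitTime ξ, ξ j = s) :=
    fun s => forall₂_congr fun j hj => by rw [hη j (by omega)]
  rw [PhiEx_of_not_staysInGroup hξ, PhiEx_of_not_staysInGroup hη', hexit]
  simp only [hprefix]

lemma norm_PhiEx_le (hξ : ¬ StaysInGroup ξ) (hlam : lam ≤ exitTime ξ) :
    ‖PhiEx a lam ℓ xs ξ‖ ≤ ‖(xs (exitTime ξ + 1 - lam), ℓ (xs (exitTime ξ + 1 - lam)))‖ := by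
  rw [PhiEx_of_not_staysInGroup hξ, if_neg hlam.not_gt]
  split_ifs <;> simp [Prod.norm_def]

lemma PhiEx_eq_zero_or_fst_pos (ha : 0 < a) (hxs : ∀ k, 0 < xs k) (ξ : FS) :
    PhiEx a lam ℓ xs ξ = 0 ∨ 0 < (PhiEx a lam ℓ xs ξ).1 := by
  by_cases hξ : StaysInGroup ξ
  · exact .inl (PhiEx_of_staysInGroup hξ)
  · rw [PhiEx_of_not_staysInGroup hξ]
    split_ifs <;> simp [ha, hxs]

theorem continuous_PhiEx (hxs : Tendsto xs atTop (𝓝 0))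
    (hℓxs : Tendsto (ℓ ∘ xs) atTop (𝓝 0)) : Continuous (PhiEx a lam ℓ xs) := by
  refine continuous_iff_continuousAt.2 fun ξ => ?_
  by_cases hξ : StaysInGroup ξ
  · have hsmall : Tendsto (fun k => (xs k, ℓ (xs k))) atTop (𝓝 0) := hxs.prodMk_nhds hℓxs
    rw [ContinuousAt, PhiEx_of_staysInGroup hξ, Metric.nhds_basis_ball.tendsto_right_iff]
    intro ε hε
    obtain ⟨M, hM⟩ := eventually_atTop.1 (hsmall.eventually (Metric.ball_mem_nhds 0 hε))
    filter_upwards [eventually_le_exitTime hξ (M + lam)] with η hη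
    by_cases hη' : StaysInGroup η
    · simpa [PhiEx_of_staysInGroup hη'] using hε
    · have hlate := hη hη'
      rw [mem_ball_zero_iff]
      exact (norm_PhiEx_le hη' (by omega)).trans_lt (mem_ball_zero_iff.1 (hM _ (by omega)))
  · refine EventuallyEq.continuousAt (y := PhiEx a lam ℓ xs ξ) ?_
    filter_upwards [(isOpen_cylinder _ ξ _).mem_nhds (self_mem_cylinder ξ (exitTime ξ + 1))]
      with η hη using PhiEx_eq_of_mem_cylinder hξ hη

end Potential

section Rotation

lemma measurable_shift4 : Measurable shift4 :=
  measurable_pi_lambda _ fun n => measurable_pi_apply (n + 1)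

lemma mem_rot_of_shift4_eq {Φ : FS → ℝ × ℝ} (hΦ : Measurable Φ) {p : FS} (hp : shift4 p = p) :
    Φ p ∈ rot Φ :=
  ⟨⟨Measure.dirac p, inferInstance⟩, by
    show (Measure.dirac p).map shift4 = Measure.dirac p
    rw [Measure.map_dirac' measurable_shift4, hp],
   integral_dirac' _ _ hΦ.stronglyMeasurable⟩

variable {X : Type*} [MeasurableSpace X] {μ : Measure X} {Φ : X → ℝ × ℝ}

lemma fst_integral_nonneg (hΦ : ∀ x, Φ x = 0 ∨ 0 < (Φ x).1) (hint : Integrable Φ μ) :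
    0 ≤ (∫ x, Φ x ∂μ).1 := by
  rw [fst_integral hint]
  exact integral_nonneg fun x => (hΦ x).elim (fun h => by simp [h]) le_of_lt

lemma integral_eq_zero_of_fst_integral_nonpos (hΦ : ∀ x, Φ x = 0 ∨ 0 < (Φ x).1)
    (hint : Integrable Φ μ) (h : (∫ x, Φ x ∂μ).1 ≤ 0) : ∫ x, Φ x ∂μ = 0 := by
  have hfst : ∫ x, (Φ x).1 ∂μ = 0 := by
    rw [← fst_integral hint]
    exact le_antisymm h (fst_integral_nonneg hΦ hint)
  have hfst_ae : (fun x => (Φ x).1) =ᵐ[μ] 0 :=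
    (integral_eq_zero_iff_of_nonneg (fun x => (hΦ x).elim (fun h => by simp [h]) le_of_lt)
      hint.fst).1 hfst
  have hΦ_ae : Φ =ᵐ[μ] 0 := by
    filter_upwards [hfst_ae] with x hx
    exact (hΦ x).resolve_right (by simp [hx])
  rw [integral_congr_ae hΦ_ae]
  exact integral_zero _ _

theorem isExposed_rot_zero {Φ : FS → ℝ × ℝ} (hΦ : Continuous Φ)
    (hpos : ∀ ξ, Φ ξ = 0 ∨ 0 < (Φ ξ).1) (h0 : 0 ∈ rot Φ) : IsExposed ℝ (rot Φ) {0} := by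
  intro _
  refine ⟨-ContinuousLinearMap.fst ℝ ℝ ℝ, ?_⟩
  have hint (μ : ProbabilityMeasure FS) : Integrable Φ μ :=
    hΦ.integrable_of_hasCompactSupport (.of_compactSpace Φ)
  ext w
  simp only [Set.mem_singleton_iff, Set.mem_ofPred_eq, neg_apply,
    ContinuousLinearMap.coe_fst', neg_le_neg_iff]
  constructor
  · rintro rfl
    refine ⟨h0, ?_⟩
    rintro _ ⟨μ, -, rfl⟩
    exact fst_integral_nonneg hpos (hint μ)
  · rintro ⟨⟨μ, -, rfl⟩, hmax⟩
    exact integral_eq_zero_of_fst_integral_nonpos hpos (hint μ) (hmax 0 h0)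

end Rotation

theorem stmt19_general (a : ℝ) (ha : 0 < a) (lam : ℕ)
    (ℓ : ℝ → ℝ) (hℓcont : ContinuousOn ℓ (Set.Icc 0 a)) (hℓ0 : ℓ 0 = 0)
    (xs : ℕ → ℝ) (hxs : ∀ k, xs k ∈ Set.Ioo 0 a)
    (htend : Filter.Tendsto xs Filter.atTop (nhds 0)) :
    Continuous (PhiEx a lam ℓ xs) ∧
    IsExposed ℝ (rot (PhiEx a lam ℓ xs)) {((0 : ℝ), (0 : ℝ))} := by
  have hℓxs : Tendsto (ℓ ∘ xs) atTop (𝓝 0) := by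
    have hxs_Icc : Tendsto xs atTop (𝓝[Set.Icc 0 a] 0) :=
      tendsto_nhdsWithin_of_tendsto_nhds_of_eventually_within _ htend
        (.of_forall fun k => Set.Ioo_subset_Icc_self (hxs k))
    simpa [hℓ0] using (hℓcont 0 ⟨le_rfl, ha.le⟩).tendsto.comp hxs_Icc
  have hcont := continuous_PhiEx (a := a) (lam := lam) htend hℓxs
  have h0 : (0 : ℝ × ℝ) ∈ rot (PhiEx a lam ℓ xs) := by
    simpa [PhiEx_of_staysInGroup (fun _ => rfl : StaysInGroup fun _ => 0)] using
      mem_rot_of_shift4_eq hcont.measurable (p := fun _ => 0) rfl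
  exact ⟨hcont, isExposed_rot_zero hcont (PhiEx_eq_zero_or_fst_pos ha fun k => (hxs k).1) h0⟩

/-- In Example 7, the potential `Φ` is continuous and `(0,0)` is an exposed point of the
rotation set `Rot(Φ)`. -/
theorem stmt19 (a : ℝ) (ha : 0 < a) (lam : ℕ) (hlam : 3 ≤ lam)
    (ℓ : ℝ → ℝ) (hℓcont : ContinuousOn ℓ (Set.Icc 0 a)) (hℓ0 : ℓ 0 = 0)
    (hℓnonneg : ∀ t ∈ Set.Icc (0 : ℝ) a, 0 ≤ ℓ t)
    (hℓmono : StrictMonoOn ℓ (Set.Icc 0 a))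
    (hℓconc : StrictConcaveOn ℝ (Set.Icc 0 a) ℓ)
    (xs : ℕ → ℝ) (hxs : ∀ k, xs k ∈ Set.Ioo 0 a) (hanti : StrictAnti xs)
    (hexp : ∃ ρ : ℝ, 0 < ρ ∧ ρ < 1 ∧ ∀ k, xs (k + 1) ≤ ρ * xs k)
    (htend : Filter.Tendsto xs Filter.atTop (nhds 0)) :
    Continuous (PhiEx a lam ℓ xs) ∧
    IsExposed ℝ (rot (PhiEx a lam ℓ xs)) {((0 : ℝ), (0 : ℝ))} :=
  stmt19_general a ha lam ℓ hℓcont hℓ0 xs hxs htend
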